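/- arXiv:2407.15742 — 5 statements merged into one kernel-verified Lean document; each statement's English description precedes it below -/
import Mathlib

section
/- For β, ρ > 0 and k ∈ ℕ with k ≥ 1, the function U₂(x) = log(8k²β^{2k}/(|x^k − ρ^k|² + β^{2k})²) solves -ΔU₂(x) = |x|^{2k−2} e^{U₂(x)} on ℝ², where x^k denotes the k-th complex power of x identified with a complex number. -/
/-! For an entire function `f` and `b > 0`, a direct computation gives
`Δ log (|f|² + b) = 4 b |f'|² / (|f|² + b)²`: in the sum of the second derivatives along `1` and
`i` the terms involving `f''` cancel because `i² = -1`, and the squared first-order terms add up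
to `|f|² |f'|²`. Applied to `f z = z ^ k - ρ ^ k`, for which `|f'(x)|² = k² |x|^(2k-2)`, this is
the equation. -/

noncomputable def lapC (f : ℂ → ℝ) (x : ℂ) : ℝ :=
  fderiv ℝ (fun y => fderiv ℝ f y (1 : ℂ)) x (1 : ℂ) +
  fderiv ℝ (fun y => fderiv ℝ f y Complex.I) x Complex.I

open Complex
open scoped InnerProductSpace

lemma lapC_const_sub_mul (a r : ℝ) (F : ℂ → ℝ) (x : ℂ) :
    lapC (fun z => a - r * F z) x = -r * lapC F x := by
  have hF : ∀ v : ℂ, (fun y => fderiv ℝ (fun z => a - r * F z) y v) =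
      (-r) • fun y => fderiv ℝ F y v := by
    intro v
    funext y
    have hrF : (fun z => r * F z) = r • F := rfl
    simp [fderiv_const_sub, hrF, fderiv_const_smul_field]
  simp only [lapC, hF, fderiv_const_smul_field, Pi.smul_apply, smul_apply, smul_eq_mul]
  ring

lemma real_inner_sq_add_real_inner_mul_I_sq (w p : ℂ) :
    ⟪w, p⟫_ℝ ^ 2 + ⟪w, p * I⟫_ℝ ^ 2 = ‖w‖ ^ 2 * ‖p‖ ^ 2 := by
  simp only [Complex.inner, Complex.sq_norm, normSq_apply, mul_re, mul_im, conj_re, conj_im, I_re,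
    I_im]
  ring

section LogNormSqAdd

variable {f : ℂ → ℂ} {b : ℝ}

lemma fderiv_log_norm_sq_add_apply (hf : Differentiable ℂ f) (hb : 0 < b) (y v : ℂ) :
    fderiv ℝ (fun z => Real.log (‖f z‖ ^ 2 + b)) y v =
      2 * ⟪f y, deriv f y * v⟫_ℝ / (‖f y‖ ^ 2 + b) := by
  have hd := (hf y).hasDerivAt.hasFDerivAt.restrictScalars ℝ
  rw [((hd.norm_sq.add_const b).log (by positivity)).fderiv]
  simp only [smul_apply, ContinuousLinearMap.comp_apply, innerSL_apply_apply,
    ContinuousLinearMap.coe_restrictScalars', ContinuousLinearMap.toSpanSingleton_apply,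
    smul_eq_mul, nsmul_eq_mul, mul_comm v]
  push_cast
  ring

lemma fderiv_fderiv_log_norm_sq_add_apply (hf : Differentiable ℂ f) (hb : 0 < b) (x v : ℂ) :
    fderiv ℝ (fun y => fderiv ℝ (fun z => Real.log (‖f z‖ ^ 2 + b)) y v) x v =
      2 * ((‖deriv f x * v‖ ^ 2 + ⟪f x, deriv (deriv f) x * v * v⟫_ℝ) * (‖f x‖ ^ 2 + b)
        - 2 * ⟪f x, deriv f x * v⟫_ℝ ^ 2) / (‖f x‖ ^ 2 + b) ^ 2 := by
  simp only [fderiv_log_norm_sq_add_apply hf hb]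
  have hd := (hf x).hasDerivAt.hasFDerivAt.restrictScalars ℝ
  have hd' := ((hf.deriv x).hasDerivAt.mul_const v).hasFDerivAt.restrictScalars ℝ
  have hnum := (hd.inner ℝ hd').const_mul 2
  have hden := hd.norm_sq.add_const b
  have hinv : HasFDerivAt (𝕜 := ℝ) (fun y => (‖f y‖ ^ 2 + b)⁻¹) _ x :=
    (hasDerivAt_inv (by positivity)).comp_hasFDerivAt x hden
  simp only [div_eq_mul_inv]
  rw [(hnum.fun_mul hinv).fderiv]
  simp only [add_apply, smul_apply, ContinuousLinearMap.comp_apply,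
    ContinuousLinearMap.prod_apply, fderivInnerCLM_apply, innerSL_apply_apply,
    ContinuousLinearMap.coe_restrictScalars', ContinuousLinearMap.toSpanSingleton_apply,
    smul_eq_mul, nsmul_eq_mul, mul_comm v, real_inner_self_eq_norm_sq]
  field_simp
  push_cast
  ring

theorem lapC_log_norm_sq_add (hf : Differentiable ℂ f) (hb : 0 < b) (x : ℂ) :
    lapC (fun z => Real.log (‖f z‖ ^ 2 + b)) x =
      4 * b * ‖deriv f x‖ ^ 2 / (‖f x‖ ^ 2 + b) ^ 2 := by
  have hsq := real_inner_sq_add_real_inner_mul_I_sq (f x) (deriv f x)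
  have hII : deriv (deriv f) x * I * I = -(deriv (deriv f) x * 1 * 1) := by
    rw [mul_assoc, I_mul_I]; ring
  simp only [lapC, fderiv_fderiv_log_norm_sq_add_apply hf hb, hII, inner_neg_right, norm_mul,
    norm_I, mul_one] at hsq ⊢
  field_simp
  linear_combination (-4) * hsq

theorem neg_lapC_log_div_sq (hf : Differentiable ℂ f) (hb : 0 < b) {a : ℝ} (ha : a ≠ 0) (x : ℂ) :
    -lapC (fun z => Real.log (a / (‖f z‖ ^ 2 + b) ^ 2)) x =
      8 * b * ‖deriv f x‖ ^ 2 / (‖f x‖ ^ 2 + b) ^ 2 := by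
  have hlog : (fun z => Real.log (a / (‖f z‖ ^ 2 + b) ^ 2)) =
      fun z => Real.log a - 2 * Real.log (‖f z‖ ^ 2 + b) := by
    funext z
    rw [Real.log_div ha (by positivity), Real.log_pow, Nat.cast_ofNat]
  rw [hlog, lapC_const_sub_mul, lapC_log_norm_sq_add hf hb]
  ring

end LogNormSqAdd

theorem singular_liouville_bubble_general (k : ℕ) (hk : 1 ≤ k) (β ρ : ℝ) (hβ : 0 < β) :
    ∀ x : ℂ,
      -lapC (fun z => Real.log (8 * (k : ℝ) ^ 2 * β ^ (2 * k) /
          ((‖z ^ k - (ρ : ℂ) ^ k‖ ^ 2 + β ^ (2 * k)) ^ 2))) x =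
        ‖x‖ ^ (2 * k - 2) *
          Real.exp (Real.log (8 * (k : ℝ) ^ 2 * β ^ (2 * k) /
            ((‖x ^ k - (ρ : ℂ) ^ k‖ ^ 2 + β ^ (2 * k)) ^ 2))) := by
  intro x
  have hf : Differentiable ℂ fun z : ℂ => z ^ k - (ρ : ℂ) ^ k := by fun_prop
  have hderiv : ‖deriv (fun z : ℂ => z ^ k - (ρ : ℂ) ^ k) x‖ ^ 2 =
      (k : ℝ) ^ 2 * ‖x‖ ^ (2 * k - 2) := by
    rw [deriv_sub_const, deriv_pow_field, norm_mul, norm_pow, Complex.norm_natCast, mul_pow,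
      ← pow_mul, show (k - 1) * 2 = 2 * k - 2 by omega]
  rw [neg_lapC_log_div_sq hf (by positivity) (by positivity), hderiv, Real.exp_log (by positivity)]
  ring

theorem singular_liouville_bubble (k : ℕ) (hk : 1 ≤ k) (β ρ : ℝ) (hβ : 0 < β) (hρ : 0 < ρ) :
    ∀ x : ℂ,
      -lapC (fun z => Real.log (8 * (k : ℝ) ^ 2 * β ^ (2 * k) /
          ((‖z ^ k - (ρ : ℂ) ^ k‖ ^ 2 + β ^ (2 * k)) ^ 2))) x =
        ‖x‖ ^ (2 * k - 2) *
          Real.exp (Real.log (8 * (k : ℝ) ^ 2 * β ^ (2 * k) /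
            ((‖x ^ k - (ρ : ℂ) ^ k‖ ^ 2 + β ^ (2 * k)) ^ 2))) :=
  singular_liouville_bubble_general k hk β ρ hβ
end

section
/- The constant C₁ := ∫₀^∞ r · ((r²−1)/(r²+1)) · e^{U(r)} · (U(r)²/2) dr equals 12(1 − log 2), where U(r) = log(8/(r²+1)²). -/
/-!
With `t = r ^ 2 + 1` one has `U = log 8 - 2 log t`, and the integrand is `2 r g(t)` for
`g(t) = 2 (t - 2) U ^ 2 / t ^ 3`. Integrating by parts in `t` gives the explicit primitive
`F(r) = (-2 r ^ 2 U ^ 2 + (8 r ^ 2 + 4) U - 16 r ^ 2 - 12) / (r ^ 2 + 1) ^ 2`.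
Since powers of `log t` are `o(t)`, `F` tends to `0` at infinity, and `F(0) = 4 log 8 - 12`,
so `C₁ = -F(0) = 12 (1 - log 2)`. The integrand is nonnegative for `r ≥ 1`, so its integrability
on `(1, ∞)` also follows from the limit of `F`.
-/

noncomputable def U (r : ℝ) : ℝ := Real.log (8 / ((r ^ 2 + 1) ^ 2))

open Real Set Filter Topology MeasureTheory Polynomial

theorem integrableOn_Ioi_of_hasDerivAt_of_nonneg_of_le {F f : ℝ → ℝ} {a b l : ℝ}
    (hf : ContinuousOn f (Icc a b)) (hderiv : ∀ x ∈ Ici b, HasDerivAt F (f x) x)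
    (hnonneg : ∀ x ∈ Ioi b, 0 ≤ f x) (hF : Tendsto F atTop (𝓝 l)) :
    IntegrableOn f (Ioi a) := by
  have hab : Ioi a ⊆ Ioc a b ∪ Ioi b := fun x hx => by
    rcases le_or_gt x b with h | h
    exacts [Or.inl ⟨hx, h⟩, Or.inr h]
  refine IntegrableOn.mono_set ?_ hab
  exact (hf.integrableOn_Icc.mono_set Ioc_subset_Icc_self).union
    (integrableOn_Ioi_deriv_of_nonneg' hderiv hnonneg hF)

theorem tendsto_eval_log_div_atTop (p : ℝ[X]) :
    Tendsto (fun t => p.eval (log t) / t) atTop (𝓝 0) := by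
  induction p using Polynomial.induction_on' with
  | add p q hp hq => simpa [add_div] using hp.add hq
  | monomial n c =>
    simpa [mul_div_assoc] using
      (tendsto_pow_log_div_mul_add_atTop 1 0 n one_ne_zero).const_mul c

theorem U_eq_log_sub (r : ℝ) : U r = log 8 - 2 * log (r ^ 2 + 1) := by
  rw [U, log_div (by norm_num) (by positivity), log_pow]
  push_cast
  ring

theorem exp_U (r : ℝ) : exp (U r) = 8 / (r ^ 2 + 1) ^ 2 :=
  exp_log (by positivity)

theorem hasDerivAt_U (r : ℝ) : HasDerivAt U (-(4 * r / (r ^ 2 + 1))) r := by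
  have h := ((((hasDerivAt_pow 2 r).add_const 1).log (by positivity)).const_mul 2).const_sub
    (log 8)
  rw [funext U_eq_log_sub]
  refine h.congr_deriv ?_
  push_cast
  ring

@[fun_prop]
theorem continuous_U : Continuous U :=
  continuous_iff_continuousAt.2 fun r => (hasDerivAt_U r).continuousAt

noncomputable def primitiveC1 (r : ℝ) : ℝ :=
  (-2 * r ^ 2 * U r ^ 2 + (8 * r ^ 2 + 4) * U r - 16 * r ^ 2 - 12) / (r ^ 2 + 1) ^ 2

theorem hasDerivAt_primitiveC1 (r : ℝ) :
    HasDerivAt primitiveC1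
      (r * ((r ^ 2 - 1) / (r ^ 2 + 1)) * exp (U r) * (U r ^ 2 / 2)) r := by
  have hsq := hasDerivAt_pow 2 r
  have hU := hasDerivAt_U r
  have hnum := ((((hsq.const_mul (-2)).mul (hU.pow 2)).add
    (((hsq.const_mul 8).add_const 4).mul hU)).sub (hsq.const_mul 16)).sub_const 12
  have h := hnum.div ((hsq.add_const 1).pow 2) (by simp only [Pi.pow_apply]; positivity)
  refine h.congr_deriv ?_
  simp only [Pi.add_apply, Pi.sub_apply, Pi.mul_apply, Pi.pow_apply, exp_U]
  field_simp
  ring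

theorem primitiveC1_zero : primitiveC1 0 = 12 * log 2 - 12 := by
  rw [primitiveC1, U_eq_log_sub, show (8 : ℝ) = 2 ^ 3 by norm_num, log_pow]
  norm_num
  ring

theorem tendsto_primitiveC1_atTop : Tendsto primitiveC1 atTop (𝓝 0) := by
  set u : ℝ[X] := C (log 8) - 2 * X
  -- with `t = r ^ 2 + 1`: `U r = u.eval (log t)` and `primitiveC1 r = p / t + q / t ^ 2` for the
  -- polynomials `p`, `q` of `hp`, `hq` evaluated at `log t`
  have hp := tendsto_eval_log_div_atTop (-2 * u ^ 2 + 8 * u - 16)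
  have hq := tendsto_eval_log_div_atTop (2 * u ^ 2 - 4 * u + 4)
  have ht : Tendsto (fun r : ℝ => r ^ 2 + 1) atTop atTop :=
    tendsto_atTop_add_const_right _ 1 (tendsto_pow_atTop two_ne_zero)
  have h := (hp.add (tendsto_inv_atTop_zero.mul hq)).comp ht
  rw [zero_mul, add_zero] at h
  refine h.congr fun r => ?_
  have : r ^ 2 + 1 ≠ 0 := by positivity
  simp only [Function.comp, primitiveC1, U_eq_log_sub, u, eval_add, eval_sub, eval_mul, eval_pow,
    eval_C, eval_X, eval_ofNat, eval_neg]
  field_simp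
  ring

theorem constant_C1 :
    ∫ r in Set.Ioi (0 : ℝ),
        r * ((r ^ 2 - 1) / (r ^ 2 + 1)) * Real.exp (U r) * (U r ^ 2 / 2) =
      12 * (1 - Real.log 2) := by
  have hint : IntegrableOn
      (fun r => r * ((r ^ 2 - 1) / (r ^ 2 + 1)) * exp (U r) * (U r ^ 2 / 2)) (Ioi 0) := by
    refine integrableOn_Ioi_of_hasDerivAt_of_nonneg_of_le (b := 1) ?_
      (fun r _ => hasDerivAt_primitiveC1 r) (fun r hr => ?_) tendsto_primitiveC1_atTop
    · exact Continuous.continuousOn (by fun_prop (disch := intro; positivity))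
    · have hr : 1 < r := hr
      have : 0 ≤ r * ((r ^ 2 - 1) / (r ^ 2 + 1)) :=
        mul_nonneg (by linarith) (div_nonneg (by nlinarith) (by positivity))
      positivity
  rw [integral_Ioi_of_hasDerivAt_of_tendsto' (fun r _ => hasDerivAt_primitiveC1 r) hint
    tendsto_primitiveC1_atTop, primitiveC1_zero]
  ring
end

section
/- For all real x ∈ (0,1] and all real p > 0, the inequality x · e^p · (log(1/x)/p)^p ≤ 1 holds. -/
/-!
Put `t = log (1 / x) ≥ 0`. Applying `log y ≤ y - 1` to `y = t / p` gives `(t / p) ^ p ≤ exp (t - p)`,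
so the left side is at most `x * exp t = 1`.
-/

open Real

theorem Real.rpow_le_exp_mul_sub_one {y p : ℝ} (hy : 0 ≤ y) (hp : 0 ≤ p) :
    y ^ p ≤ exp (p * (y - 1)) := by
  rcases hp.eq_or_lt with rfl | hp
  · simp
  rcases hy.eq_or_lt with rfl | hy
  · rw [zero_rpow hp.ne']
    positivity
  rw [rpow_def_of_pos hy, exp_le_exp, mul_comm]
  exact mul_le_mul_of_nonneg_left (log_le_sub_one_of_pos hy) hp.le

theorem elementary_log_power_inequality (x p : ℝ) (hx0 : 0 < x) (hx1 : x ≤ 1) (hp : 0 < p) :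
    x * Real.exp p * (Real.log (1 / x) / p) ^ p ≤ 1 := by
  set t := log (1 / x)
  have ht : 0 ≤ t := log_nonneg (one_le_one_div hx0 hx1)
  have hpow : (t / p) ^ p ≤ exp (t - p) := by
    simpa [mul_sub, mul_div_cancel₀ t hp.ne'] using
      rpow_le_exp_mul_sub_one (div_nonneg ht hp.le) hp.le
  calc x * exp p * (t / p) ^ p
      ≤ x * exp p * exp (t - p) := by gcongr
    _ = x * exp t := by rw [mul_assoc, ← exp_add, add_sub_cancel]
    _ = 1 := by rw [exp_log (one_div_pos.2 hx0), mul_one_div_cancel hx0.ne']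
end

section
/- For k ∈ {4,5}, the function φ_k(η) := (1 + kη²) · η^{−2kη²/((kη−1)(η+1))}, defined for η ∈ (1/k, 1), has a critical point at η = 2/(k−1), i.e. φ_k'(2/(k−1)) = 0. -/
/-! Write `φ_k(η) = (1 + kη²) · exp(-q(η) log η)` with `q(η) = 2kη² / ((kη - 1)(η + 1))`.
Both the numerator of `q'` and `(kη - 1)(η + 1) - (1 + kη²)` are multiples of `(k - 1)η - 2`.
So at `η = 2/(k - 1)` the exponent `q` is stationary, and `q(η) = 2kη²/(1 + kη²)`, which makes
the term `-q(η)/η` coming from `log` cancel the logarithmic derivative `2kη/(1 + kη²)` of the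
prefactor. This works for every `k > 1`. -/

open Real

noncomputable def phiExponent (k η : ℝ) : ℝ :=
  2 * k * η ^ 2 / ((k * η - 1) * (η + 1))

noncomputable def phi (k η : ℝ) : ℝ :=
  (1 + k * η ^ 2) * exp (-phiExponent k η * log η)

section

variable {k x : ℝ}

lemma hasDerivAt_phiExponent (hD : (k * x - 1) * (x + 1) ≠ 0) :
    HasDerivAt (phiExponent k)
      (2 * k * x * ((k - 1) * x - 2) / ((k * x - 1) * (x + 1)) ^ 2) x := by
  have hnum : HasDerivAt (fun η : ℝ => 2 * k * η ^ 2) (2 * k * (2 * x)) x := by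
    simpa using (hasDerivAt_pow 2 x).const_mul (2 * k)
  have hden : HasDerivAt (fun η : ℝ => (k * η - 1) * (η + 1))
      (k * (x + 1) + (k * x - 1)) x := by
    simpa using (((hasDerivAt_id x).const_mul k).sub_const 1).fun_mul
      ((hasDerivAt_id x).add_const 1)
  exact (hnum.fun_div hden hD).congr_deriv (by ring)

lemma phi_denom_eq (hx : (k - 1) * x = 2) : (k * x - 1) * (x + 1) = 1 + k * x ^ 2 := by
  linear_combination hx

end

lemma hasDerivAt_exp_neg_mul_log {q : ℝ → ℝ} {x : ℝ} (hq : HasDerivAt q 0 x) (hx : x ≠ 0) :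
    HasDerivAt (fun η => exp (-q η * log η)) (exp (-q x * log x) * (-q x / x)) x := (hq.fun_neg.fun_mul (hasDerivAt_log hx)).exp.congr_deriv (by ring)

theorem deriv_phi_eq_zero {k : ℝ} (hk : 1 < k) : deriv (phi k) (2 / (k - 1)) = 0 := by
  set x := 2 / (k - 1)
  have hx : (k - 1) * x = 2 := mul_div_cancel₀ 2 (sub_ne_zero.mpr hk.ne')
  have hx0 : 0 < x := div_pos two_pos (sub_pos.mpr hk)
  have hD : (k * x - 1) * (x + 1) = 1 + k * x ^ 2 := phi_denom_eq hx
  have hD0 : 0 < 1 + k * x ^ 2 := by positivity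
  have hq : HasDerivAt (phiExponent k) 0 x := by
    refine (hasDerivAt_phiExponent (hD ▸ hD0.ne')).congr_deriv ?_
    rw [hx, sub_self, mul_zero, zero_div]
  have hP : HasDerivAt (fun η : ℝ => 1 + k * η ^ 2) (k * (2 * x)) x := by
    simpa using ((hasDerivAt_pow 2 x).const_mul k).const_add 1
  have hφ : HasDerivAt (phi k) _ x := hP.fun_mul (hasDerivAt_exp_neg_mul_log hq hx0.ne')
  rw [hφ.deriv, phiExponent, hD]
  field_simp
  ring

theorem phi_critical_point (k : ℝ) (hk : k = 4 ∨ k = 5) :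
    deriv (fun η : ℝ =>
        (1 + k * η ^ 2) *
          Real.exp (-(2 * k * η ^ 2 / ((k * η - 1) * (η + 1))) * Real.log η))
      (2 / (k - 1)) = 0 := by
  rcases hk with rfl | rfl <;> exact deriv_phi_eq_zero (by norm_num)
end

section
/- Let p ≥ 1 and C > 0, and let a, b, c be real numbers with −(1−1/C)p ≤ a ≤ C and |b| + |c| ≤ Cp. Then there exists a constant K > 0 depending only on C such that |(1 + a/p + b/p² + c/p³)^p − e^a (1 + (1/p)(b − a²/2))| ≤ K e^a (1 + a⁶ + b⁶ + c⁶)/p² for all sufficiently large p. -/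
/-!
With `D = max C 1` and `w = b / p + c / p ^ 2`, the base is `1 + (a + w) / p` with `|w| ≤ D`, and
for `p ≥ 4 D ^ 2` also `|(a + w) / p| ≤ 1 - 1 / (2 D)`. The cubic Taylor bound for `log (1 + x)` then
gives `p log (1 + (a + w) / p) = a + δ + E` with `δ = (b - a ^ 2 / 2) / p` and `p ^ 2 |E| = O(m ^ 3)`,
where `m = max (|a|, |b|, |c|, 1)`. As `δ + E ≤ w ≤ D` (from `log (1 + x) ≤ x`) and `δ ≤ D`, the bound
`|e ^ u - 1 - v| ≤ e ^ D (|u - v| + v ^ 2)` for `u, v ≤ D` controls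
`(1 + (a + w) / p) ^ p - e ^ a (1 + δ) = e ^ a (e ^ (δ + E) - 1 - δ)` by `e ^ a e ^ D O(m ^ 6) / p ^ 2`,
and `m ^ 6 ≤ 1 + a ^ 6 + b ^ 6 + c ^ 6`.
-/

open Real

namespace Real

theorem abs_exp_sub_exp_le_exp_mul {u v M : ℝ} (hu : u ≤ M) (hv : v ≤ M) :
    |exp u - exp v| ≤ exp M * |u - v| := by
  wlog h : v ≤ u generalizing u v
  · rw [abs_sub_comm, abs_sub_comm u]
    exact this hv hu (le_of_not_ge h)
  rw [abs_of_nonneg (sub_nonneg.2 (exp_le_exp.2 h)), abs_of_nonneg (sub_nonneg.2 h)]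
  have hexp : exp u - exp v ≤ exp u * (u - v) := by
    have := add_one_le_exp (v - u)
    rw [exp_sub, le_div_iff₀ (exp_pos u)] at this
    linarith
  calc exp u - exp v ≤ exp u * (u - v) := hexp
    _ ≤ exp M * (u - v) := by gcongr

theorem abs_exp_sub_one_sub_le_exp_mul_sq {t M : ℝ} (hM : 0 ≤ M) (ht : t ≤ M) :
    |exp t - 1 - t| ≤ exp M * t ^ 2 := by
  have h1M : 1 ≤ exp M := one_le_exp hM
  rcases le_or_gt |t| 1 with h | h
  · calc |exp t - 1 - t| ≤ t ^ 2 := abs_exp_sub_one_sub_id_le h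
      _ ≤ exp M * t ^ 2 := le_mul_of_one_le_left (sq_nonneg t) h1M
  · have hsq : |t| ≤ t ^ 2 := by nlinarith [sq_abs t]
    rw [abs_of_nonneg (by linarith [add_one_le_exp t])]
    nlinarith [exp_le_exp.2 ht, neg_le_abs t]

theorem abs_exp_sub_one_sub_le {u v M : ℝ} (hM : 0 ≤ M) (hu : u ≤ M) (hv : v ≤ M) :
    |exp u - 1 - v| ≤ exp M * (|u - v| + v ^ 2) :=
  calc |exp u - 1 - v| ≤ |exp u - exp v| + |exp v - 1 - v| := by
        simpa only [sub_sub] using abs_sub_le (exp u) (exp v) (1 + v)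
    _ ≤ exp M * |u - v| + exp M * v ^ 2 :=
        add_le_add (abs_exp_sub_exp_le_exp_mul hu hv) (abs_exp_sub_one_sub_le_exp_mul_sq hM hv)
    _ = exp M * (|u - v| + v ^ 2) := by ring

theorem abs_log_one_add_sub_le {x : ℝ} (hx : |x| < 1) :
    |log (1 + x) - (x - x ^ 2 / 2)| ≤ |x| ^ 3 / (1 - |x|) := by
  have h := abs_log_sub_add_sum_range_le (x := -x) (by rwa [abs_neg]) 2
  simp only [Finset.sum_range_succ, Finset.sum_range_zero, abs_neg, sub_neg_eq_add] at h
  convert h using 2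
  push_cast
  ring

theorem abs_mul_log_one_add_div_sub_le {p q ε : ℝ} (hp : 0 < p) (hε : 0 < ε)
    (hq : ε ≤ 1 - |q / p|) :
    |p * log (1 + q / p) - (q - q ^ 2 / (2 * p))| ≤ |q| ^ 3 / (ε * p ^ 2) := by
  have hlog := abs_log_one_add_sub_le (x := q / p) (by linarith)
  have hid : p * log (1 + q / p) - (q - q ^ 2 / (2 * p)) =
      p * (log (1 + q / p) - (q / p - (q / p) ^ 2 / 2)) := by
    field_simp
  rw [hid, abs_mul, abs_of_pos hp]
  calc p * |log (1 + q / p) - (q / p - (q / p) ^ 2 / 2)| ≤ p * (|q / p| ^ 3 / ε) := by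
        gcongr
        exact hlog.trans (div_le_div_of_nonneg_left (by positivity) hε hq)
    _ = |q| ^ 3 / (ε * p ^ 2) := by
        rw [abs_div, abs_of_pos hp]
        field_simp

end Real

theorem max_abs_pow_six_le (a b c : ℝ) :
    max (max |a| |b|) (max |c| 1) ^ 6 ≤ 1 + a ^ 6 + b ^ 6 + c ^ 6 := by
  have hmono := pow_left_monotoneOn (M₀ := ℝ) (n := 6)
  rw [hmono.map_max (Set.mem_Ici.2 (by positivity)) (Set.mem_Ici.2 (by positivity)),
    hmono.map_max (Set.mem_Ici.2 (abs_nonneg a)) (Set.mem_Ici.2 (abs_nonneg b)),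
    hmono.map_max (Set.mem_Ici.2 (abs_nonneg c)) (Set.mem_Ici.2 zero_le_one)]
  simp only [Even.pow_abs (by decide : Even 6), one_pow, max_le_iff]
  have := Even.pow_nonneg (n := 6) (by decide) a
  have := Even.pow_nonneg (n := 6) (by decide) b
  have := Even.pow_nonneg (n := 6) (by decide) c
  refine ⟨⟨?_, ?_⟩, ?_, ?_⟩ <;> linarith

section Expansion

variable {D p a b c m : ℝ}

theorem one_add_div_add_div_pow_eq (hp : p ≠ 0) :
    1 + a / p + b / p ^ 2 + c / p ^ 3 = 1 + (a + (b / p + c / p ^ 2)) / p := by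
  field_simp
  ring

theorem abs_div_add_div_sq_le (hp : 1 ≤ p) (hbc : |b| + |c| ≤ D * p) :
    |b / p + c / p ^ 2| ≤ D := by
  have hp0 : 0 < p := by linarith
  calc |b / p + c / p ^ 2| ≤ |b| / p + |c| / p ^ 2 := by
        have h := abs_add_le (b / p) (c / p ^ 2)
        rwa [abs_div, abs_div, abs_of_pos hp0, abs_of_pos (pow_pos hp0 2)] at h
    _ ≤ |b| / p + |c| / p := by
        gcongr
        nlinarith
    _ = (|b| + |c|) / p := by ring
    _ ≤ D := by rwa [div_le_iff₀ hp0]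

theorem one_div_two_mul_le_one_sub_abs_div (hD : 1 ≤ D) (hp : 4 * D ^ 2 ≤ p)
    (ha₁ : -(1 - 1 / D) * p ≤ a) (ha₂ : a ≤ D) {w : ℝ} (hw : |w| ≤ D) :
    1 / (2 * D) ≤ 1 - |(a + w) / p| := by
  have hp0 : 0 < p := by nlinarith
  have hD0 : 0 < D := by linarith
  rw [abs_div, abs_of_pos hp0, le_sub_comm, div_le_iff₀ hp0, abs_le]
  obtain ⟨hw₁, hw₂⟩ := abs_le.1 hw
  have hhalf : 1 / (2 * D) = 1 / D / 2 := by ring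
  have hinv_le : 1 / D ≤ 1 := by rw [div_le_one hD0]; exact hD
  have hinv_p : 4 * D ≤ 1 / D * p := by
    calc 4 * D = 1 / D * (4 * D ^ 2) := by field_simp
      _ ≤ 1 / D * p := by gcongr
  have hinv_p' : 1 / D * p ≤ p := mul_le_of_le_one_left hp0.le hinv_le
  rw [hhalf]
  constructor <;> nlinarith

theorem abs_mul_log_one_add_div_pow_sub_le (hD : 1 ≤ D) (hp : 4 * D ^ 2 ≤ p)
    (ha₁ : -(1 - 1 / D) * p ≤ a) (ha₂ : a ≤ D) (hbc : |b| + |c| ≤ D * p)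
    (hm : 1 ≤ m) (ha : |a| ≤ m) (hb : |b| ≤ m) (hc : |c| ≤ m) :
    |p * log (1 + a / p + b / p ^ 2 + c / p ^ 3) - a - (b - a ^ 2 / 2) / p| ≤
      20 * D ^ 4 * m ^ 3 / p ^ 2 := by
  have hp0 : 0 < p := by nlinarith
  have hp1 : 1 ≤ p := by nlinarith
  have hD0 : 0 < D := by linarith
  set w := b / p + c / p ^ 2 with hw_def
  have hw : |w| ≤ D := abs_div_add_div_sq_le hp1 hbc
  have hpw : |p * w| ≤ 2 * m := by
    have h := abs_add_le b (c / p)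
    rw [abs_div, abs_of_pos hp0] at h
    have hpw_eq : p * w = b + c / p := by rw [hw_def]; field_simp
    rw [hpw_eq]
    linarith [div_le_self (abs_nonneg c) hp1]
  have hq : |a + w| ≤ 2 * D * m := by
    have := abs_add_le a w
    nlinarith
  have hlog := abs_mul_log_one_add_div_sub_le hp0 (by positivity)
    (one_div_two_mul_le_one_sub_abs_div hD hp ha₁ ha₂ hw)
  have hsplit : p * log (1 + a / p + b / p ^ 2 + c / p ^ 3) - a - (b - a ^ 2 / 2) / p =
      (p * log (1 + (a + w) / p) - ((a + w) - (a + w) ^ 2 / (2 * p))) +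
        (c - a * (p * w) - w * (p * w) / 2) / p ^ 2 := by
    rw [one_add_div_add_div_pow_eq hp0.ne', hw_def]
    field_simp
    ring
  have hcubic : |a + w| ^ 3 / (1 / (2 * D) * p ^ 2) ≤ 16 * D ^ 4 * m ^ 3 / p ^ 2 := by
    calc |a + w| ^ 3 / (1 / (2 * D) * p ^ 2) = 2 * D * |a + w| ^ 3 / p ^ 2 := by
          field_simp
      _ ≤ 2 * D * (2 * D * m) ^ 3 / p ^ 2 := by gcongr
      _ = 16 * D ^ 4 * m ^ 3 / p ^ 2 := by ring
  have hrest : |c - a * (p * w) - w * (p * w) / 2| ≤ 4 * D ^ 4 * m ^ 3 := by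
    have h₁ : |a * (p * w)| ≤ m * (2 * m) := by rw [abs_mul]; gcongr
    have h₂ : |w * (p * w) / 2| ≤ D * (2 * m) / 2 := by
      rw [abs_div, abs_mul, abs_two]; gcongr
    have h₃ := abs_sub (c - a * (p * w)) (w * (p * w) / 2)
    have h₄ := abs_sub c (a * (p * w))
    have hm3 : m ≤ m ^ 3 := le_self_pow₀ hm (by norm_num)
    have hm23 : m ^ 2 ≤ m ^ 3 := pow_le_pow_right₀ hm (by norm_num)
    have hD4 : D ≤ D ^ 4 := le_self_pow₀ hD (by norm_num)
    have hD14 : 1 ≤ D ^ 4 := one_le_pow₀ hD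
    nlinarith
  rw [hsplit]
  calc _ ≤ |p * log (1 + (a + w) / p) - ((a + w) - (a + w) ^ 2 / (2 * p))| +
        |(c - a * (p * w) - w * (p * w) / 2) / p ^ 2| := abs_add_le _ _
    _ ≤ 16 * D ^ 4 * m ^ 3 / p ^ 2 + 4 * D ^ 4 * m ^ 3 / p ^ 2 := by
        gcongr
        · exact hlog.trans hcubic
        · rw [abs_div, abs_of_pos (by positivity : (0 : ℝ) < p ^ 2)]
          gcongr
    _ = 20 * D ^ 4 * m ^ 3 / p ^ 2 := by ring

theorem abs_one_add_div_pow_rpow_sub_le (hD : 1 ≤ D) (hp : 4 * D ^ 2 ≤ p)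
    (ha₁ : -(1 - 1 / D) * p ≤ a) (ha₂ : a ≤ D) (hbc : |b| + |c| ≤ D * p)
    (hm : 1 ≤ m) (ha : |a| ≤ m) (hb : |b| ≤ m) (hc : |c| ≤ m) :
    |(1 + a / p + b / p ^ 2 + c / p ^ 3) ^ p - exp a * (1 + (1 / p) * (b - a ^ 2 / 2))| ≤
      23 * D ^ 4 * exp D * exp a * m ^ 6 / p ^ 2 := by
  have hp0 : 0 < p := by nlinarith
  have hp1 : 1 ≤ p := by nlinarith
  have hD0 : 0 < D := by linarith
  have hw := abs_div_add_div_sq_le hp1 hbc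
  have hbase_pos : 0 < 1 + a / p + b / p ^ 2 + c / p ^ 3 := by
    have hx := one_div_two_mul_le_one_sub_abs_div hD hp ha₁ ha₂ hw
    rw [one_add_div_add_div_pow_eq hp0.ne']
    linarith [neg_abs_le ((a + (b / p + c / p ^ 2)) / p), one_div_pos.2 (by positivity : 0 < 2 * D)]
  rw [rpow_def_of_pos hbase_pos]
  set L := log (1 + a / p + b / p ^ 2 + c / p ^ 3) * p
  set δ := (b - a ^ 2 / 2) / p with hδ_def
  have hE : |L - a - δ| ≤ 20 * D ^ 4 * m ^ 3 / p ^ 2 := by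
    have h := abs_mul_log_one_add_div_pow_sub_le hD hp ha₁ ha₂ hbc hm ha hb hc
    rw [mul_comm p] at h
    exact h
  have hL : L ≤ (1 + a / p + b / p ^ 2 + c / p ^ 3 - 1) * p :=
    mul_le_mul_of_nonneg_right (log_le_sub_one_of_pos hbase_pos) hp0.le
  have hLa : L - a ≤ D :=
    calc L - a ≤ (1 + a / p + b / p ^ 2 + c / p ^ 3 - 1) * p - a := by linarith
      _ = b / p + c / p ^ 2 := by field_simp; ring
      _ ≤ D := (le_abs_self _).trans hw
  have hδ : δ ≤ D := by
    rw [div_le_iff₀ hp0]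
    linarith [le_abs_self b, abs_nonneg c, sq_nonneg a]
  have hδsq : δ ^ 2 ≤ 3 * m ^ 6 / p ^ 2 := by
    have hnum : |b - a ^ 2 / 2| ≤ 3 / 2 * m ^ 2 := by
      have hasq : a ^ 2 ≤ m ^ 2 := by rw [← sq_abs]; gcongr
      have := abs_sub b (a ^ 2 / 2)
      rw [abs_of_nonneg (by positivity : 0 ≤ a ^ 2 / 2)] at this
      nlinarith
    have hm46 : m ^ 4 ≤ m ^ 6 := pow_le_pow_right₀ hm (by norm_num)
    calc δ ^ 2 = |b - a ^ 2 / 2| ^ 2 / p ^ 2 := by rw [sq_abs, div_pow]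
      _ ≤ (3 / 2 * m ^ 2) ^ 2 / p ^ 2 := by gcongr
      _ ≤ 3 * m ^ 6 / p ^ 2 := by gcongr; nlinarith
  have hfactor : exp L - exp a * (1 + 1 / p * (b - a ^ 2 / 2)) = exp a * (exp (L - a) - 1 - δ) := by
    rw [exp_sub, hδ_def]; field_simp; ring
  have hpoly : 20 * D ^ 4 * m ^ 3 + 3 * m ^ 6 ≤ 23 * D ^ 4 * m ^ 6 := by
    have hm36 : m ^ 3 ≤ m ^ 6 := pow_le_pow_right₀ hm (by norm_num)
    have hD4 : 1 ≤ D ^ 4 := one_le_pow₀ hD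
    nlinarith [pow_pos (by linarith : (0 : ℝ) < m) 6]
  rw [hfactor, abs_mul, abs_of_pos (exp_pos a)]
  calc exp a * |exp (L - a) - 1 - δ| ≤ exp a * (exp D * (|L - a - δ| + δ ^ 2)) := by
        gcongr; exact abs_exp_sub_one_sub_le hD0.le hLa hδ
    _ ≤ exp a * (exp D * (20 * D ^ 4 * m ^ 3 / p ^ 2 + 3 * m ^ 6 / p ^ 2)) := by gcongr
    _ = exp a * exp D * (20 * D ^ 4 * m ^ 3 + 3 * m ^ 6) / p ^ 2 := by ring
    _ ≤ exp a * exp D * (23 * D ^ 4 * m ^ 6) / p ^ 2 := by gcongr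
    _ = 23 * D ^ 4 * exp D * exp a * m ^ 6 / p ^ 2 := by ring

end Expansion

theorem taylor_expansion_power (C : ℝ) (hC : 0 < C) :
    ∃ K > 0, ∃ p₀ : ℝ, ∀ p : ℝ, p₀ ≤ p → ∀ a b c : ℝ,
      -(1 - 1 / C) * p ≤ a → a ≤ C → |b| + |c| ≤ C * p →
      |(1 + a / p + b / p ^ 2 + c / p ^ 3) ^ p -
          Real.exp a * (1 + (1 / p) * (b - a ^ 2 / 2))| ≤
        K * Real.exp a * (1 + a ^ 6 + b ^ 6 + c ^ 6) / p ^ 2 := by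
  set D := max C 1
  have hD : 1 ≤ D := le_max_right C 1
  have hCD : C ≤ D := le_max_left C 1
  refine ⟨23 * D ^ 4 * exp D, by positivity, 4 * D ^ 2, fun p hp a b c ha₁ ha₂ hbc => ?_⟩
  have hp0 : 0 < p := by nlinarith
  have ha₁' : -(1 - 1 / D) * p ≤ a := by
    refine le_trans ?_ ha₁
    have := one_div_le_one_div_of_le hC hCD
    nlinarith
  have hbc' : |b| + |c| ≤ D * p := hbc.trans (by gcongr)
  set m := max (max |a| |b|) (max |c| 1)
  calc _ ≤ 23 * D ^ 4 * exp D * exp a * m ^ 6 / p ^ 2 :=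
        abs_one_add_div_pow_rpow_sub_le hD hp ha₁' (ha₂.trans hCD) hbc'
          ((le_max_right _ _).trans (le_max_right _ _))
          ((le_max_left _ _).trans (le_max_left _ _))
          ((le_max_right _ _).trans (le_max_left _ _))
          ((le_max_left _ _).trans (le_max_right _ _))
    _ ≤ _ := by
        gcongr
        exact max_abs_pow_six_le a b c
end
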